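/- For the generalized Earley algorithm over an NFA, the completer operation preserves the chart-correctness invariant: if [A → α • (i)] ∈ c_j and [E → ν • A π (k)] ∈ c_i both satisfy the invariant, then the item [E → ν A • π (k)] added to c_j satisfies the invariant. -/

import Mathlib

theorem NFA.mem_evalFrom_singleton_append {α σ : Type*} {M : NFA α σ} {k i j : σ}
    {x y : List α} (hx : i ∈ M.evalFrom {k} x) (hy : j ∈ M.evalFrom {i} y) :
    j ∈ M.evalFrom {k} (x ++ y) := by
  rw [NFA.evalFrom_append, NFA.mem_evalFrom_iff_exists]
  exact ⟨i, hx, hy⟩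

namespace ContextFreeGrammar

variable {T : Type*} {g : ContextFreeGrammar T}

theorem derives_of_mem_rules {r : ContextFreeRule T g.NT} (hr : r ∈ g.rules) :
    g.Derives [Symbol.nonterminal r.input] r.output :=
  Produces.single ⟨r, hr, ContextFreeRule.Rewrites.input_output⟩

theorem Derives.append {u u' v v' : List (Symbol T g.NT)} (hu : g.Derives u u')
    (hv : g.Derives v v') : g.Derives (u ++ v) (u' ++ v') :=
  (hu.append_right v).trans (hv.append_left u')

end ContextFreeGrammar

/-- The completer operation of the generalized Earley algorithm over an NFA
preserves the chart-correctness invariant: if the complete item `[A → out • (i)]`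
in chart `c_j` (with production `(A, out)` in the grammar) and the completable
item `[E → ν • A π (k)]` in chart `c_i` both satisfy the invariant, then the
item `[E → ν A • π (k)]` added to chart `c_j` satisfies the invariant. -/
theorem earley_nfa_completer_preserves_invariant {T σ : Type}
    (g : ContextFreeGrammar T) (M : NFA T σ)
    (i j k : σ) (A : g.NT) (out ν : List (Symbol T g.NT))
    (hrule : (⟨A, out⟩ : ContextFreeRule T g.NT) ∈ g.rules)
    (h1 : ∃ η : List T, j ∈ M.evalFrom {i} η ∧ g.Derives out (η.map Symbol.terminal))
    (h2 : ∃ γ : List T, i ∈ M.evalFrom {k} γ ∧ g.Derives ν (γ.map Symbol.terminal)) :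
    ∃ ζ : List T, j ∈ M.evalFrom {k} ζ ∧
      g.Derives (ν ++ [Symbol.nonterminal A]) (ζ.map Symbol.terminal) := by
  obtain ⟨η, hη, hout⟩ := h1
  obtain ⟨γ, hγ, hν⟩ := h2
  have hA : g.Derives [Symbol.nonterminal A] (η.map Symbol.terminal) :=
    (ContextFreeGrammar.derives_of_mem_rules hrule).trans hout
  refine ⟨γ ++ η, NFA.mem_evalFrom_singleton_append hγ hη, ?_⟩
  rw [List.map_append]
  exact hν.append hA
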